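/- arXiv:1412.7002 — 2 statements merged into one kernel-verified Lean document; each statement's English description precedes it below -/
import Mathlib

section
/- Let b ∈ C(ℝ) with b ≥ 0, let N ≥ 1, and let ω be a modulus of continuity of b on [−N−1, N+1] (i.e., ω is nondecreasing on [0,∞), ω(δ) → 0 as δ → 0⁺, and |b(x) − b(y)| ≤ ω(|x−y|) for x, y ∈ [−N−1, N+1]), with ω(δ) > 0 for δ > 0. Let ρ ∈ C₀^∞(ℝ) with ρ ≥ 0, ∫ρ dx = 1 and supp ρ ⊂ [−1,1], set ρ_{1/k}(x) = kρ(kx), b_k = b * ρ_{1/k} + ω(k^{−1}) and g_k = |b − b_k|/b_k on [−N,N]. Then for every x ∈ [−N,N]: (a) 0 ≤ g_k(x) ≤ 2 for all k ≥ 1; (b) if b(x) = 0 then g_k(x) = 1; (c) if b(x) ≠ 0 then g_k(x) → 0 as k → ∞. Consequently g_k converges pointwise on [−N,N] to the indicator function of {x : b(x) = 0}. -/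
open Filter Set MeasureTheory
open scoped Topology

noncomputable section

/-- Mollified approximations in Corollary 1: for continuous `b ≥ 0` with modulus
of continuity `ω` on `[-N-1, N+1]`, the functions
`b_k = b * ρ_{1/k} + ω(k⁻¹)` and `g_k = |b - b_k|/b_k` satisfy, on `[-N,N]`:
(a) `0 ≤ g_k ≤ 2`; (b) `g_k(x) = 1` if `b(x) = 0`; (c) `g_k(x) → 0` if
`b(x) ≠ 0`; consequently `g_k` converges pointwise on `[-N,N]` to the indicator
function of `{x : b(x) = 0}`. -/
theorem mollified_ratio_properties
    (b : ℝ → ℝ) (hb : Continuous b) (hb0 : ∀ x, 0 ≤ b x)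
    (N : ℝ) (hN : 1 ≤ N)
    (ω : ℝ → ℝ)
    (hωmono : MonotoneOn ω (Ici (0:ℝ)))
    (hωlim : Tendsto ω (nhdsWithin 0 (Ioi (0:ℝ))) (nhds 0))
    (hωmod : ∀ x ∈ Icc (-N-1) (N+1), ∀ y ∈ Icc (-N-1) (N+1),
      |b x - b y| ≤ ω |x - y|)
    (hωpos : ∀ δ : ℝ, 0 < δ → 0 < ω δ)
    (ρ : ℝ → ℝ) (hρsm : ContDiff ℝ (⊤ : ℕ∞) ρ) (hρsupp : HasCompactSupport ρ)
    (hρ0 : ∀ x, 0 ≤ ρ x) (hρint : ∫ x, ρ x = 1)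
    (hρsupp' : tsupport ρ ⊆ Icc (-1:ℝ) 1)
    (bk : ℕ → ℝ → ℝ)
    (hbk : ∀ k : ℕ, ∀ x : ℝ,
      bk k x = (∫ y, b (x - y) * ((k : ℝ) * ρ ((k : ℝ) * y))) + ω ((k : ℝ)⁻¹))
    (g : ℕ → ℝ → ℝ)
    (hg : ∀ k x, g k x = |b x - bk k x| / bk k x) :
    (∀ x ∈ Icc (-N) N, ∀ k : ℕ, 1 ≤ k → 0 ≤ g k x ∧ g k x ≤ 2) ∧
    (∀ x ∈ Icc (-N) N, b x = 0 → ∀ k : ℕ, 1 ≤ k → g k x = 1) ∧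
    (∀ x ∈ Icc (-N) N, b x ≠ 0 → Tendsto (fun k : ℕ => g k x) atTop (𝓝 0)) ∧
    (∀ x ∈ Icc (-N) N, Tendsto (fun k : ℕ => g k x) atTop
      (𝓝 (Set.indicator {y : ℝ | b y = 0} (fun _ => (1:ℝ)) x))) := by
  have hρcont : Continuous ρ := hρsm.continuous
  -- If ρ (c * y) ≠ 0 then |y| ≤ c⁻¹ (for c > 0)
  have hsupp : ∀ (c : ℝ), 0 < c → ∀ y : ℝ, ρ (c * y) ≠ 0 → |y| ≤ c⁻¹ := by
    intro c hc y hy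
    have hmem : c * y ∈ tsupport ρ := subset_tsupport ρ hy
    have h1 : |c * y| ≤ 1 := abs_le.2 ⟨(hρsupp' hmem).1, (hρsupp' hmem).2⟩
    rw [abs_mul, abs_of_pos hc] at h1
    calc |y| = c⁻¹ * (c * |y|) := by field_simp
      _ ≤ c⁻¹ * 1 := mul_le_mul_of_nonneg_left h1 (inv_nonneg.2 hc.le)
      _ = c⁻¹ := mul_one _
  -- main estimates
  have key : ∀ k : ℕ, 1 ≤ k → ∀ x ∈ Icc (-N) N,
      (0 ≤ ∫ y, b (x - y) * ((k : ℝ) * ρ ((k : ℝ) * y))) ∧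
      |(∫ y, b (x - y) * ((k : ℝ) * ρ ((k : ℝ) * y))) - b x| ≤ ω ((k : ℝ)⁻¹) := by
    intro k hk x hx
    set c : ℝ := (k : ℝ) with hcdef
    have hk0 : 0 < k := hk
    have hc : 0 < c := by rw [hcdef]; exact_mod_cast hk0
    have hc1 : (1:ℝ) ≤ c := by rw [hcdef]; exact_mod_cast hk
    have hcinv : c⁻¹ ≤ 1 := inv_le_one_of_one_le₀ hc1
    have hcinvpos : 0 < c⁻¹ := inv_pos.2 hc
    have hcs : ∀ y : ℝ, y ∉ Icc (-c⁻¹) c⁻¹ → ρ (c * y) = 0 := by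
      intro y hy
      by_contra h
      exact hy ⟨(abs_le.1 (hsupp c hc y h)).1, (abs_le.1 (hsupp c hc y h)).2⟩
    have hmolcont : Continuous fun y => c * ρ (c * y) :=
      continuous_const.mul (hρcont.comp (continuous_const.mul continuous_id))
    have hmolsupp : HasCompactSupport fun y => c * ρ (c * y) := by
      apply HasCompactSupport.intro (isCompact_Icc (a := -c⁻¹) (b := c⁻¹))
      intro y hy; simp [hcs y hy]
    have hmolint : Integrable fun y => c * ρ (c * y) :=
      hmolcont.integrable_of_hasCompactSupport hmolsupp
    have hmol1 : (∫ y, c * ρ (c * y)) = 1 := by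
      rw [MeasureTheory.integral_const_mul, MeasureTheory.Measure.integral_comp_mul_left ρ c,
        hρint, abs_of_pos hcinvpos]
      simp [smul_eq_mul, mul_inv_cancel₀ hc.ne']
    have hfcont : Continuous fun y => b (x - y) * (c * ρ (c * y)) :=
      (hb.comp (continuous_const.sub continuous_id)).mul hmolcont
    have hfsupp : HasCompactSupport fun y => b (x - y) * (c * ρ (c * y)) := by
      apply HasCompactSupport.intro (isCompact_Icc (a := -c⁻¹) (b := c⁻¹))
      intro y hy; simp [hcs y hy]
    have hfint : Integrable fun y => b (x - y) * (c * ρ (c * y)) :=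
      hfcont.integrable_of_hasCompactSupport hfsupp
    constructor
    · exact integral_nonneg fun y => mul_nonneg (hb0 _) (mul_nonneg hc.le (hρ0 _))
    · have hgcont : Continuous fun y => (b (x - y) - b x) * (c * ρ (c * y)) :=
        ((hb.comp (continuous_const.sub continuous_id)).sub continuous_const).mul hmolcont
      have hgsupp : HasCompactSupport fun y => (b (x - y) - b x) * (c * ρ (c * y)) := by
        apply HasCompactSupport.intro (isCompact_Icc (a := -c⁻¹) (b := c⁻¹))
        intro y hy; simp [hcs y hy]
      have hgint : Integrable fun y => (b (x - y) - b x) * (c * ρ (c * y)) :=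
        hgcont.integrable_of_hasCompactSupport hgsupp
      have hbxint : (∫ y, b x * (c * ρ (c * y))) = b x := by
        rw [MeasureTheory.integral_const_mul, hmol1, mul_one]
      have hsplit : (∫ y, (b (x - y) - b x) * (c * ρ (c * y)))
          = (∫ y, b (x - y) * (c * ρ (c * y))) - ∫ y, b x * (c * ρ (c * y)) := by
        rw [← integral_sub hfint (hmolint.const_mul (b x))]
        congr 1
        funext y; ring
      have heq : (∫ y, b (x - y) * (c * ρ (c * y))) - b x
          = ∫ y, (b (x - y) - b x) * (c * ρ (c * y)) := by
        rw [hsplit, hbxint]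
      have hpt : ∀ y : ℝ, |(b (x - y) - b x) * (c * ρ (c * y))|
          ≤ ω c⁻¹ * (c * ρ (c * y)) := by
        intro y
        by_cases hy : ρ (c * y) = 0
        · simp [hy]
        · have hyle : |y| ≤ c⁻¹ := hsupp c hc y hy
          have hy1 : |y| ≤ 1 := hyle.trans hcinv
          rcases abs_le.1 hy1 with ⟨hy2, hy3⟩
          rcases hx with ⟨hx1, hx2⟩
          have hxy : x - y ∈ Icc (-N-1) (N+1) := ⟨by linarith, by linarith⟩
          have hxmem : x ∈ Icc (-N-1) (N+1) := ⟨by linarith, by linarith⟩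
          have hmod := hωmod (x - y) hxy x hxmem
          rw [show x - y - x = -y by ring, abs_neg] at hmod
          have hmod2 : |b (x - y) - b x| ≤ ω c⁻¹ :=
            hmod.trans (hωmono (abs_nonneg y) hcinvpos.le hyle)
          have hnn : 0 ≤ c * ρ (c * y) := mul_nonneg hc.le (hρ0 _)
          rw [abs_mul, abs_of_nonneg hnn]
          exact mul_le_mul_of_nonneg_right hmod2 hnn
      rw [heq]
      calc |∫ y, (b (x - y) - b x) * (c * ρ (c * y))|
          ≤ ∫ y, |(b (x - y) - b x) * (c * ρ (c * y))| := by
            have := norm_integral_le_integral_norm (μ := (volume : Measure ℝ))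
                (fun y => (b (x - y) - b x) * (c * ρ (c * y)))
            simp only [Real.norm_eq_abs] at this
            exact this
        _ ≤ ∫ y, ω c⁻¹ * (c * ρ (c * y)) :=
            integral_mono hgint.abs (hmolint.const_mul _) hpt
        _ = ω c⁻¹ := by rw [MeasureTheory.integral_const_mul, hmol1, mul_one]
  -- positivity of bk and bounds
  have hbkfacts : ∀ k : ℕ, 1 ≤ k → ∀ x ∈ Icc (-N) N,
      0 < bk k x ∧ ω ((k:ℝ)⁻¹) ≤ bk k x ∧ b x ≤ bk k x ∧
      |b x - bk k x| ≤ 2 * ω ((k:ℝ)⁻¹) := by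
    intro k hk x hx
    obtain ⟨hI0, hIes⟩ := key k hk x hx
    have hk0 : 0 < k := hk
    have hc : (0:ℝ) < (k:ℝ) := by exact_mod_cast hk0
    have hω : 0 < ω ((k:ℝ)⁻¹) := hωpos _ (inv_pos.2 hc)
    rw [hbk k x]
    set I := ∫ y, b (x - y) * ((k : ℝ) * ρ ((k : ℝ) * y))
    rcases abs_le.1 hIes with ⟨h1, h2⟩
    refine ⟨by linarith, by linarith, by linarith, ?_⟩
    rw [abs_le]
    constructor <;> linarith [hb0 x]
  have partA : ∀ x ∈ Icc (-N) N, ∀ k : ℕ, 1 ≤ k → 0 ≤ g k x ∧ g k x ≤ 2 := by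
    intro x hx k hk
    obtain ⟨hpos, hωle, hble, habs⟩ := hbkfacts k hk x hx
    rw [hg k x]
    refine ⟨div_nonneg (abs_nonneg _) hpos.le, ?_⟩
    rw [div_le_iff₀ hpos]
    calc |b x - bk k x| ≤ 2 * ω ((k:ℝ)⁻¹) := habs
      _ ≤ 2 * bk k x := by linarith
  have partB : ∀ x ∈ Icc (-N) N, b x = 0 → ∀ k : ℕ, 1 ≤ k → g k x = 1 := by
    intro x hx hbx k hk
    obtain ⟨hpos, _, _, _⟩ := hbkfacts k hk x hx
    rw [hg k x, hbx, zero_sub, abs_neg, abs_of_pos hpos, div_self hpos.ne']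
  have partC : ∀ x ∈ Icc (-N) N, b x ≠ 0 →
      Tendsto (fun k : ℕ => g k x) atTop (𝓝 0) := by
    intro x hx hbx
    have hbpos : 0 < b x := lt_of_le_of_ne (hb0 x) (Ne.symm hbx)
    have hωto : Tendsto (fun k : ℕ => ω ((k:ℝ)⁻¹)) atTop (𝓝 0) := by
      apply hωlim.comp
      apply tendsto_nhdsWithin_of_tendsto_nhds_of_eventually_within
      · exact tendsto_inv_atTop_nhds_zero_nat
      · filter_upwards [eventually_ge_atTop 1] with k hk
        have hk0 : 0 < k := hk
        have hkr : (0:ℝ) < (k:ℝ) := by exact_mod_cast hk0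
        exact inv_pos.2 hkr
    have hbound : Tendsto (fun k : ℕ => 2 * ω ((k:ℝ)⁻¹) / b x) atTop (𝓝 0) := by
      have := (hωto.const_mul 2).div_const (b x)
      simpa using this
    apply squeeze_zero' ?_ ?_ hbound
    · filter_upwards [eventually_ge_atTop 1] with k hk
      obtain ⟨hpos, _, _, _⟩ := hbkfacts k hk x hx
      rw [hg k x]
      exact div_nonneg (abs_nonneg _) hpos.le
    · filter_upwards [eventually_ge_atTop 1] with k hk
      obtain ⟨hpos, _, hble, habs⟩ := hbkfacts k hk x hx
      rw [hg k x]
      have hk0 : 0 < k := hk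
      have hω : 0 < ω ((k:ℝ)⁻¹) := hωpos _ (inv_pos.2 (by exact_mod_cast hk0))
      exact div_le_div₀ (by linarith) habs hbpos hble
  refine ⟨partA, partB, partC, ?_⟩
  intro x hx
  by_cases hbx : b x = 0
  · rw [Set.indicator_of_mem (by exact hbx)]
    have hEq : (fun _ : ℕ => (1:ℝ)) =ᶠ[atTop] fun k => g k x := by
      filter_upwards [eventually_ge_atTop 1] with k hk
      exact (partB x hx hbx k hk).symm
    exact tendsto_const_nhds.congr' hEq
  · rw [Set.indicator_of_notMem (by exact hbx)]
    exact partC x hx hbx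
end
end

section
/- Let b_k ∈ C^∞(ℝ^d × ℝ, ℝ^d) be such that (1+|x|)^{−1}|b_k(x,t)| is bounded, let V_k ∈ C¹(ℝ^d) be positive with ⟨b_k(x,t), ∇V_k(x)⟩ ≤ C₃ V_k(x) for all (x,t) ∈ ℝ^d × [0,T] and some C₃ > 0, let ν be a nonnegative finite Borel measure on ℝ^d with ∫ V_k dν < ∞, and let (μ_t^k)_{t∈[0,T]} be a family of nonnegative finite measures solving the Cauchy problem ∂_t μ + div(b_k μ) = 0, μ|_{t=0} = ν with μ_t^k(ℝ^d) ≤ ν(ℝ^d). Then for every t ∈ [0,T] (outside a null set) one has ∫ V_k dμ_t^k ≤ e^{C₃ t} ∫ V_k dν. -/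
open MeasureTheory Metric Set Filter
open scoped Topology ENNReal RealInnerProductSpace

noncomputable section

/-- The family `(μ_t)_{t∈[0,T]}` of nonnegative Borel measures on `ℝ^d` is a
solution of the Cauchy problem `∂_t μ + div (b μ) = 0`, `μ|_{t=0} = ν` on `[0,T]`:
`t ↦ μ_t(B)` is measurable, `t ↦ μ_t(K)` is in `L¹[0,T]` for compact `K`,
`b` is `μ_t dt`-integrable on `U × [0,T]` for every ball `U` and the weak identity
`∫ u(x,t) μ_t(dx) = ∫ u(x,0) ν(dx) + ∫₀ᵗ ∫ [∂_t u + ⟨b,∇u⟩] μ_s(dx) ds`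
holds for a.e. `t ∈ [0,T]`, for every `C¹` test function `u` vanishing for
`|x| > R` for some `R`. -/
def IsNonnegSolution {d : ℕ} (T : ℝ)
    (b : EuclideanSpace ℝ (Fin d) → ℝ → EuclideanSpace ℝ (Fin d))
    (ν : Measure (EuclideanSpace ℝ (Fin d)))
    (μ : ℝ → Measure (EuclideanSpace ℝ (Fin d))) : Prop :=
  (∀ B : Set (EuclideanSpace ℝ (Fin d)), MeasurableSet B → Bornology.IsBounded B →
      Measurable (fun t => μ t B)) ∧
  (∀ t ∈ Icc (0:ℝ) T, ∀ K : Set (EuclideanSpace ℝ (Fin d)), IsCompact K → μ t K < ⊤) ∧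
  (∀ K : Set (EuclideanSpace ℝ (Fin d)), IsCompact K →
      IntegrableOn (fun t => (μ t K).toReal) (Icc (0:ℝ) T)) ∧
  (∀ (x₀ : EuclideanSpace ℝ (Fin d)) (R : ℝ), 0 < R →
      (∫⁻ t in Icc (0:ℝ) T, ∫⁻ x in ball x₀ R, ENNReal.ofReal ‖b x t‖ ∂(μ t)) < ⊤) ∧
  ∀ u : EuclideanSpace ℝ (Fin d) → ℝ → ℝ,
    ContDiff ℝ 1 (fun q : EuclideanSpace ℝ (Fin d) × ℝ => u q.1 q.2) →
    (∃ R > 0, ∀ x t, R < ‖x‖ → u x t = 0) →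
    ∀ᵐ t ∂(volume.restrict (Icc (0:ℝ) T)),
      (∫ x, u x t ∂(μ t))
        = (∫ x, u x 0 ∂ν)
          + ∫ s in Icc (0:ℝ) t,
              ∫ x, (deriv (u x) s + ⟪b x s, gradient (fun y => u y s) x⟫) ∂(μ s)


namespace LyapAux

/-! ### A smooth transition function -/

/-- Smooth transition: `1` for `r ≤ 1`, `0` for `r ≥ 2`. -/
def eta (r : ℝ) : ℝ := Real.smoothTransition (2 - r)

lemma eta_contDiff : ContDiff ℝ (⊤ : ℕ∞) eta :=
  Real.smoothTransition.contDiff.comp (contDiff_const.sub contDiff_id)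

lemma eta_one {r : ℝ} (h : r ≤ 1) : eta r = 1 :=
  Real.smoothTransition.one_of_one_le (by linarith)

lemma eta_zero {r : ℝ} (h : 2 ≤ r) : eta r = 0 :=
  Real.smoothTransition.zero_of_nonpos (by linarith)

lemma eta_nonneg (r : ℝ) : 0 ≤ eta r := Real.smoothTransition.nonneg _

lemma eta_le_one (r : ℝ) : eta r ≤ 1 := Real.smoothTransition.le_one _

lemma deriv_eta_zero_of_lt {r : ℝ} (h : r < 1) : deriv eta r = 0 := by
  have he : eta =ᶠ[𝓝 r] fun _ => (1:ℝ) := by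
    filter_upwards [Iio_mem_nhds h] with y hy using eta_one (le_of_lt hy)
  rw [he.deriv_eq, deriv_const]

lemma deriv_eta_zero_of_gt {r : ℝ} (h : 2 < r) : deriv eta r = 0 := by
  have he : eta =ᶠ[𝓝 r] fun _ => (0:ℝ) := by
    filter_upwards [Ioi_mem_nhds h] with y hy using eta_zero (le_of_lt hy)
  rw [he.deriv_eq, deriv_const]

lemma eta_deriv_continuous : Continuous (deriv eta) :=
  eta_contDiff.continuous_deriv (by exact_mod_cast le_top)

lemma eta_hasDerivAt (r : ℝ) : HasDerivAt eta (deriv eta r) r :=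
  ((eta_contDiff.differentiable (by simp)) r).hasDerivAt

/-- A global bound for `|deriv eta|`. -/
lemma exists_eta_deriv_bound : ∃ C : ℝ, 0 ≤ C ∧ ∀ r, |deriv eta r| ≤ C := by
  obtain ⟨r₀, -, hr₀⟩ := isCompact_Icc.exists_isMaxOn (by norm_num : (Icc (1:ℝ) 2).Nonempty)
    (continuous_abs.comp eta_deriv_continuous).continuousOn
  refine ⟨|deriv eta r₀|, abs_nonneg _, fun r => ?_⟩
  rcases lt_or_ge r 1 with h | h1
  · simp [deriv_eta_zero_of_lt h]
  rcases le_or_gt r 2 with h2 | h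
  · exact hr₀ ⟨h1, h2⟩
  · simp [deriv_eta_zero_of_gt h]

/-! ### The truncation function -/

/-- The truncation function `φ_N(v) = N v / (N + v)`. -/
def phi (N : ℕ) (v : ℝ) : ℝ := N * v / (N + v)

lemma phi_nonneg {N : ℕ} {v : ℝ} (hv : 0 < v) : 0 ≤ phi N v := by
  have : (0:ℝ) ≤ N := Nat.cast_nonneg N
  unfold phi; positivity

lemma phi_le {N : ℕ} {v : ℝ} (hv : 0 < v) : phi N v ≤ v := by
  have hN : (0:ℝ) ≤ N := Nat.cast_nonneg N
  rw [phi, div_le_iff₀ (by linarith)]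
  nlinarith

lemma phi_le_N {N : ℕ} {v : ℝ} (hv : 0 < v) : phi N v ≤ N := by
  have hN : (0:ℝ) ≤ N := Nat.cast_nonneg N
  rw [phi, div_le_iff₀ (by linarith)]
  nlinarith

lemma phi_hasDerivAt {N : ℕ} {v : ℝ} (hv : 0 < v) :
    HasDerivAt (phi N) ((N:ℝ)^2 / (N + v)^2) v := by
  have hN : (0:ℝ) ≤ N := Nat.cast_nonneg N
  have hden : (N:ℝ) + v ≠ 0 := by positivity
  have h := (HasDerivAt.const_mul (N:ℝ) (hasDerivAt_id v)).div
    ((hasDerivAt_const v (N:ℝ)).add (hasDerivAt_id v)) hden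
  refine HasDerivAt.congr_deriv (f := phi N) h ?_
  simp only [Pi.add_apply, id]
  ring

lemma phi_deriv_mul_le {N : ℕ} {v : ℝ} (hv : 0 < v) :
    ((N:ℝ)^2 / (N + v)^2) * v ≤ phi N v := by
  have hN : (0:ℝ) ≤ N := Nat.cast_nonneg N
  rw [phi, div_mul_eq_mul_div, div_le_div_iff₀ (by positivity) (by linarith)]
  nlinarith [mul_nonneg (mul_nonneg hN hv.le) (mul_nonneg hv.le (by linarith : (0:ℝ) ≤ (N:ℝ) + v))]

lemma phi_eq_sub {N : ℕ} {v : ℝ} (hv : 0 < v) : phi N v = v - v^2 / (N + v) := by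
  have hden : (N:ℝ) + v ≠ 0 := by positivity
  unfold phi
  field_simp [phi]
  ring

lemma phi_tendsto {v : ℝ} (hv : 0 < v) :
    Tendsto (fun N : ℕ => phi N v) atTop (𝓝 v) := by
  have h0 : Tendsto (fun N : ℕ => v^2 / ((N:ℝ) + v)) atTop (𝓝 0) :=
    Tendsto.div_atTop tendsto_const_nhds
      (tendsto_atTop_add_const_right _ v tendsto_natCast_atTop_atTop)
  have h := tendsto_const_nhds.sub h0 (f := fun _ : ℕ => v)
  rw [sub_zero] at h
  exact h.congr fun N => (phi_eq_sub hv).symm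

/-! ### Constructions on Euclidean space -/

variable {d : ℕ}
local notation "Ec" => EuclideanSpace ℝ (Fin d)

lemma inner_gradient (f : Ec → ℝ) (x y : Ec) :
    ⟪y, gradient f x⟫ = fderiv ℝ f x y := by
  rw [real_inner_comm]
  exact InnerProductSpace.toDual_symm_apply

lemma integrable_of_bounded_continuous {μ : Measure Ec} (hμ : μ univ < ⊤) {f : Ec → ℝ}
    (hf : Continuous f) {C : ℝ} (hC : ∀ x, |f x| ≤ C) : Integrable f μ :=
  Integrable.mono' ((integrable_const_iff).2 (Or.inr ⟨hμ⟩)) hf.aestronglyMeasurable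
    (ae_of_all _ fun x => by simpa [Real.norm_eq_abs] using hC x)

/-- Smooth cutoff at scale `2^k`. -/
def chi (k : ℕ) (x : Ec) : ℝ := eta (‖x‖^2 / 4^k)

lemma chi_contDiff1 (k : ℕ) : ContDiff ℝ 1 (chi (d := d) k) :=
  (eta_contDiff.of_le (by exact_mod_cast le_top)).comp ((contDiff_norm_sq ℝ).div_const _)

lemma chi_nonneg (k : ℕ) (x : Ec) : 0 ≤ chi k x := eta_nonneg _

lemma chi_le_one (k : ℕ) (x : Ec) : chi k x ≤ 1 := eta_le_one _

lemma chi_one {k : ℕ} {x : Ec} (h : ‖x‖^2 ≤ 4^k) : chi k x = 1 :=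
  eta_one ((div_le_one (by positivity)).2 h)

lemma chi_zero {k : ℕ} {x : Ec} (h : 2*4^k ≤ ‖x‖^2) : chi k x = 0 :=
  eta_zero ((le_div_iff₀ (by positivity)).2 (by linarith))

lemma chi_hasFDerivAt (k : ℕ) (x : Ec) :
    HasFDerivAt (chi k) ((deriv eta (‖x‖^2/4^k) * (2/4^k)) • innerSL ℝ x) x := by
  have h1 : HasFDerivAt (fun y : Ec => ‖y‖^2) (2 • (innerSL ℝ x)) x :=
    (hasStrictFDerivAt_norm_sq x).hasFDerivAt
  have h2 : HasFDerivAt (fun y : Ec => ‖y‖^2 / 4^k) ((4^k:ℝ)⁻¹ • (2 • (innerSL ℝ x))) x := by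
    simpa [div_eq_inv_mul, smul_smul] using h1.const_mul ((4^k:ℝ)⁻¹)
  have h3 := (eta_hasDerivAt (‖x‖^2/4^k)).comp_hasFDerivAt x h2
  have heq : (deriv eta (‖x‖^2/4^k) * (2/4^k)) • innerSL ℝ x
      = deriv eta (‖x‖^2/4^k) • ((4^k:ℝ)⁻¹ • (2 • innerSL ℝ x)) := by
    ext y
    simp only [ContinuousLinearMap.smul_apply, smul_eq_mul, ContinuousLinearMap.coe_smul',
      Pi.smul_apply, nsmul_eq_mul, Nat.cast_ofNat]
    ring
  rw [heq]
  exact h3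

/-- The truncated Lyapunov function. -/
def Wf (V : Ec → ℝ) (N : ℕ) (x : Ec) : ℝ := phi N (V x)

lemma Wf_nonneg (V : Ec → ℝ) (hVpos : ∀ x, 0 < V x) (N : ℕ) (x : Ec) : 0 ≤ Wf V N x :=
  phi_nonneg (hVpos x)

lemma Wf_le_V (V : Ec → ℝ) (hVpos : ∀ x, 0 < V x) (N : ℕ) (x : Ec) : Wf V N x ≤ V x :=
  phi_le (hVpos x)

lemma Wf_le_N (V : Ec → ℝ) (hVpos : ∀ x, 0 < V x) (N : ℕ) (x : Ec) : Wf V N x ≤ N :=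
  phi_le_N (hVpos x)

lemma Wf_hasFDerivAt (V : Ec → ℝ) (hV : ContDiff ℝ 1 V) (hVpos : ∀ x, 0 < V x) (N : ℕ) (x : Ec) :
    HasFDerivAt (Wf V N) (((N:ℝ)^2/((N:ℝ)+V x)^2) • fderiv ℝ V x) x :=
  (phi_hasDerivAt (N := N) (hVpos x)).comp_hasFDerivAt x (hV.differentiable one_ne_zero x).hasFDerivAt

lemma Wf_contDiff1 (V : Ec → ℝ) (hV : ContDiff ℝ 1 V) (hVpos : ∀ x, 0 < V x) (N : ℕ) :
    ContDiff ℝ 1 (Wf V N) := by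
  have heq : Wf V N = fun x => ((N:ℝ) * V x) / ((N:ℝ) + V x) := rfl
  rw [heq]
  exact (contDiff_const.mul hV).div (contDiff_const.add hV)
    (fun x => ne_of_gt (add_pos_of_nonneg_of_pos (Nat.cast_nonneg N) (hVpos x)))

/-- The test function. -/
def uu (C₃ : ℝ) (V : Ec → ℝ) (k N : ℕ) (x : Ec) (t : ℝ) : ℝ :=
  Real.exp (-(C₃*t)) * (chi k x * Wf V N x)

lemma uu_contDiff (C₃ : ℝ) (V : Ec → ℝ) (hV : ContDiff ℝ 1 V) (hVpos : ∀ x, 0 < V x) (k N : ℕ) :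
    ContDiff ℝ 1 (fun q : Ec × ℝ => uu C₃ V k N q.1 q.2) := by
  have h1 : ContDiff ℝ 1 (fun q : Ec × ℝ => Real.exp (-(C₃*q.2))) :=
    (Real.contDiff_exp.of_le le_top).comp ((contDiff_const.mul contDiff_snd).neg)
  exact h1.mul (((chi_contDiff1 k).comp contDiff_fst).mul
    ((Wf_contDiff1 V hV hVpos N).comp contDiff_fst))

lemma uu_supp (C₃ : ℝ) (V : Ec → ℝ) (k N : ℕ) (x : Ec) (t : ℝ)
    (h : (2:ℝ)^(k+1) < ‖x‖) : uu C₃ V k N x t = 0 := by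
  have h4 : ((2:ℝ)^(k+1))^2 = 4*4^k := by
    have e1 : ((2:ℝ)^(k+1))^2 = ((2:ℝ)^2)^(k+1) := by
      rw [← pow_mul, ← pow_mul, mul_comm]
    rw [e1]
    norm_num
    rw [pow_succ]
    ring
  have h2 : 2*(4:ℝ)^k ≤ ‖x‖^2 := by
    nlinarith [norm_nonneg x, pow_pos (by norm_num : (0:ℝ) < 2) (k+1)]
  simp [uu, chi_zero h2]

/-- The good (Lyapunov) part of the transport term. -/
def g1 (C₃ : ℝ) (V : Ec → ℝ) (b : Ec → ℝ → Ec) (k N : ℕ) (x : Ec) (s : ℝ) : ℝ :=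
  Real.exp (-(C₃*s)) *
    (chi k x * (((N:ℝ)^2/((N:ℝ)+V x)^2) * (fderiv ℝ V x (b x s)) - C₃ * Wf V N x))

/-- The error part of the transport term, coming from the cutoff. -/
def g2 (C₃ : ℝ) (V : Ec → ℝ) (b : Ec → ℝ → Ec) (k N : ℕ) (x : Ec) (s : ℝ) : ℝ :=
  Real.exp (-(C₃*s)) * (Wf V N x * ((deriv eta (‖x‖^2/4^k) * (2/4^k)) * ⟪x, b x s⟫))

lemma key_eq (C₃ : ℝ) (V : Ec → ℝ) (hV : ContDiff ℝ 1 V) (hVpos : ∀ x, 0 < V x)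
    (b : Ec → ℝ → Ec) (k N : ℕ) (x : Ec) (s : ℝ) :
    deriv (uu C₃ V k N x) s + ⟪b x s, gradient (fun y => uu C₃ V k N y s) x⟫
      = g1 C₃ V b k N x s + g2 C₃ V b k N x s := by
  have hts : HasDerivAt (fun t : ℝ => -(C₃*t)) (-C₃) s := by
    exact (((hasDerivAt_id s).const_mul C₃).neg).congr_deriv (by simp)
  have htime : HasDerivAt (uu C₃ V k N x)
      ((Real.exp (-(C₃*s)) * (-C₃)) * (chi k x * Wf V N x)) s :=
    (hts.exp).mul_const _
  have hsp : HasFDerivAt (fun y => uu C₃ V k N y s)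
      (Real.exp (-(C₃*s)) • (chi k x • (((N:ℝ)^2/((N:ℝ)+V x)^2) • fderiv ℝ V x)
        + Wf V N x • ((deriv eta (‖x‖^2/4^k) * (2/4^k)) • innerSL ℝ x))) x :=
    ((chi_hasFDerivAt k x).mul (Wf_hasFDerivAt V hV hVpos N x)).const_mul _
  rw [htime.deriv, inner_gradient, hsp.fderiv]
  simp only [ContinuousLinearMap.smul_apply, ContinuousLinearMap.add_apply, innerSL_apply_apply,
    smul_eq_mul, g1, g2]
  ring

/-- The dyadic annulus. -/
def Ak (d : ℕ) (k : ℕ) : Set (EuclideanSpace ℝ (Fin d)) := {x | 4^k ≤ ‖x‖^2 ∧ ‖x‖^2 ≤ 2*4^k}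

lemma Ak_closed (k : ℕ) : IsClosed (Ak d k) := by
  have h1 : Continuous (fun x : Ec => ‖x‖^2) := (continuous_norm.pow 2)
  exact (isClosed_le continuous_const h1).inter (isClosed_le h1 continuous_const)

lemma Ak_measurable (k : ℕ) : MeasurableSet (Ak d k) := (Ak_closed k).measurableSet

lemma Ak_subset (k : ℕ) : Ak d k ⊆ closedBall 0 (2*2^k) := by
  intro x hx
  rw [mem_closedBall_zero_iff]
  have h4k : ((2:ℝ)^k)^2 = 4^k := by rw [← pow_mul, mul_comm, pow_mul]; norm_num
  nlinarith [norm_nonneg x, hx.2, pow_pos (by norm_num : (0:ℝ) < 2) k]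

lemma Ak_compact (k : ℕ) : IsCompact (Ak d k) :=
  (isCompact_closedBall (0:Ec) (2*2^k)).of_isClosed_subset (Ak_closed k) (Ak_subset k)

lemma Ak_bounded (k : ℕ) : Bornology.IsBounded (Ak d k) := (Ak_compact k).isBounded

lemma Ak_disjoint : Pairwise (Function.onFun Disjoint (Ak d)) := by
  have key : ∀ j k : ℕ, j < k → Disjoint (Ak d j) (Ak d k) := by
    intro j k hjk
    rw [Set.disjoint_left]
    intro x hxj hxk
    have h1 : (4:ℝ)^(j+1) ≤ 4^k := pow_le_pow_right₀ (by norm_num) hjk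
    have hxj2 := hxj.2
    have hxk1 := hxk.1
    have h4j : (0:ℝ) < 4^j := by positivity
    have h2 : (4:ℝ)^(j+1) = 4*4^j := by rw [pow_succ]; ring
    nlinarith
  intro j k hjk
  rcases Nat.lt_or_ge j k with h | h
  · exact key j k h
  · exact (key k j (lt_of_le_of_ne h (Ne.symm hjk))).symm

lemma g1_nonpos (C₃ : ℝ) (hC₃ : 0 < C₃) (V : Ec → ℝ) (hVpos : ∀ x, 0 < V x)
    (b : Ec → ℝ → Ec) (k N : ℕ) (x : Ec) (s : ℝ)
    (hb_le : fderiv ℝ V x (b x s) ≤ C₃ * V x) : g1 C₃ V b k N x s ≤ 0 := by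
  have hq : (0:ℝ) ≤ (N:ℝ)^2/((N:ℝ)+V x)^2 := by positivity
  have h1 : ((N:ℝ)^2/((N:ℝ)+V x)^2) * (fderiv ℝ V x (b x s))
      ≤ ((N:ℝ)^2/((N:ℝ)+V x)^2) * (C₃ * V x) := mul_le_mul_of_nonneg_left hb_le hq
  have h2 : ((N:ℝ)^2/((N:ℝ)+V x)^2) * V x ≤ Wf V N x := phi_deriv_mul_le (hVpos x)
  have hbr : ((N:ℝ)^2/((N:ℝ)+V x)^2) * (fderiv ℝ V x (b x s)) - C₃ * Wf V N x ≤ 0 := by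
    nlinarith
  exact mul_nonpos_of_nonneg_of_nonpos (Real.exp_pos _).le
    (mul_nonpos_of_nonneg_of_nonpos (chi_nonneg k x) hbr)

lemma g2_bound (C₃ : ℝ) (hC₃ : 0 < C₃) (V : Ec → ℝ) (hVpos : ∀ x, 0 < V x)
    (b : Ec → ℝ → Ec) (M Cη : ℝ) (hM0 : 0 ≤ M) (hCη0 : 0 ≤ Cη)
    (hCη : ∀ r, |deriv eta r| ≤ Cη) (k N : ℕ) (x : Ec) (s : ℝ) (hs : 0 ≤ s)
    (hM : ‖b x s‖ ≤ M * (1 + ‖x‖)) :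
    |g2 C₃ V b k N x s| ≤ (Ak d k).indicator (fun _ => (N:ℝ)*(16*M*Cη)) x := by
  by_cases hx : x ∈ Ak d k
  · rw [Set.indicator_of_mem hx]
    obtain ⟨hx1, hx2⟩ := hx
    have h2k : (0:ℝ) < 2^k := by positivity
    have h4k' : ((2:ℝ)^k)^2 = 4^k := by rw [← pow_mul, mul_comm, pow_mul]; norm_num
    have hnorm : ‖x‖ ≤ 2*2^k := by nlinarith [norm_nonneg x]
    have hb' : ‖b x s‖ ≤ M * (4*2^k) := by
      have h1 : (1:ℝ) ≤ 2^k := one_le_pow₀ (by norm_num)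
      calc ‖b x s‖ ≤ M * (1 + ‖x‖) := hM
        _ ≤ M * (4*2^k) := by nlinarith
    have hinner : |⟪x, b x s⟫| ≤ (2*2^k) * (M * (4*2^k)) :=
      (abs_real_inner_le_norm _ _).trans
        (mul_le_mul hnorm hb' (norm_nonneg _) (by positivity))
    have he : |Real.exp (-(C₃*s))| ≤ 1 := by
      rw [abs_of_pos (Real.exp_pos _)]
      exact Real.exp_le_one_iff.2 (by nlinarith)
    have hW : |Wf V N x| ≤ N := by
      rw [abs_of_nonneg (Wf_nonneg V hVpos N x)]; exact Wf_le_N V hVpos N x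
    have h4k : (2:ℝ)^k * 2^k = 4^k := by rw [← mul_pow]; norm_num
    have hfac : |deriv eta (‖x‖^2/4^k) * (2/4^k) * ⟪x, b x s⟫| ≤ 16*M*Cη := by
      rw [abs_mul, abs_mul]
      have h4 : |(2:ℝ)/4^k| = 2/4^k := abs_of_pos (by positivity)
      rw [h4]
      calc |deriv eta (‖x‖^2/4^k)| * (2/4^k) * |⟪x, b x s⟫|
          ≤ Cη * (2/4^k) * ((2*2^k) * (M * (4*2^k))) := by
            apply mul_le_mul (mul_le_mul_of_nonneg_right (hCη _) (by positivity))
              hinner (abs_nonneg _) (by positivity)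
        _ = 16*M*Cη * ((2^k*2^k)/4^k) := by ring
        _ = 16*M*Cη := by rw [h4k]; field_simp
    calc |g2 C₃ V b k N x s|
        = |Real.exp (-(C₃*s))| *
            (|Wf V N x| * |deriv eta (‖x‖^2/4^k) * (2/4^k) * ⟪x, b x s⟫|) := by
          rw [g2, abs_mul, abs_mul]
      _ ≤ 1 * ((N:ℝ) * (16*M*Cη)) := by
          apply mul_le_mul he (mul_le_mul hW hfac (abs_nonneg _) (Nat.cast_nonneg N))
            (by positivity) one_pos.le
      _ = (N:ℝ)*(16*M*Cη) := one_mul _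
  · rw [Set.indicator_of_notMem hx]
    have hz : deriv eta (‖x‖^2/4^k) = 0 := by
      simp only [Ak, mem_setOf_eq, not_and_or, not_le] at hx
      rcases hx with h | h
      · exact deriv_eta_zero_of_lt ((div_lt_one (by positivity)).2 h)
      · exact deriv_eta_zero_of_gt ((lt_div_iff₀ (by positivity)).2 (by linarith))
    simp [g2, hz]

lemma g2_continuous (C₃ : ℝ) (V : Ec → ℝ) (hV : ContDiff ℝ 1 V) (hVpos : ∀ x, 0 < V x)
    (b : Ec → ℝ → Ec) (hbc : Continuous (fun q : Ec × ℝ => b q.1 q.2)) (k N : ℕ) (s : ℝ) :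
    Continuous (fun x => g2 C₃ V b k N x s) := by
  have hbs : Continuous (fun x : Ec => b x s) :=
    hbc.comp (continuous_id.prodMk continuous_const)
  apply continuous_const.mul
  apply ((Wf_contDiff1 V hV hVpos N).continuous).mul
  exact ((eta_deriv_continuous.comp ((continuous_norm.pow 2).div_const _)).mul
    continuous_const).mul (continuous_id.inner hbs)

lemma g1_continuous (C₃ : ℝ) (V : Ec → ℝ) (hV : ContDiff ℝ 1 V) (hVpos : ∀ x, 0 < V x)
    (b : Ec → ℝ → Ec) (hbc : Continuous (fun q : Ec × ℝ => b q.1 q.2)) (k N : ℕ) (s : ℝ) :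
    Continuous (fun x => g1 C₃ V b k N x s) := by
  have hbs : Continuous (fun x : Ec => b x s) :=
    hbc.comp (continuous_id.prodMk continuous_const)
  have hq : Continuous (fun x : Ec => ((N:ℝ)^2/((N:ℝ)+V x)^2)) :=
    continuous_const.div ((continuous_const.add hV.continuous).pow 2)
      (fun x => pow_ne_zero 2 (ne_of_gt (add_pos_of_nonneg_of_pos (Nat.cast_nonneg N) (hVpos x))))
  apply continuous_const.mul
  apply ((chi_contDiff1 k).continuous).mul
  exact (hq.mul ((hV.continuous_fderiv one_ne_zero).clm_apply hbs)).sub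
    (continuous_const.mul (Wf_contDiff1 V hV hVpos N).continuous)

end LyapAux


/-- **Gronwall-type estimate for Lyapunov functions.** Let `b` be a smooth
vector field with `(1+|x|)⁻¹|b(x,t)|` bounded, let `V ∈ C¹` be positive with
`⟨b(x,t), ∇V(x)⟩ ≤ C₃ V(x)` on `ℝ^d × [0,T]`, let `ν` be a nonnegative finite
measure with `∫ V dν < ∞`, and let `(μ_t)_{t∈[0,T]}` be a family of nonnegative
finite measures solving `∂_t μ + div(b μ) = 0`, `μ|_{t=0} = ν` with
`μ_t(ℝ^d) ≤ ν(ℝ^d)`.  Then `∫ V dμ_t ≤ e^{C₃ t} ∫ V dν` for a.e. `t ∈ [0,T]`. -/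
theorem lyapunov_gronwall_estimate
    {d : ℕ} (T : ℝ) (hT : 0 < T)
    (b : EuclideanSpace ℝ (Fin d) → ℝ → EuclideanSpace ℝ (Fin d))
    (hbsm : ContDiff ℝ (⊤ : ℕ∞) (fun q : EuclideanSpace ℝ (Fin d) × ℝ => b q.1 q.2))
    (hbgrowth : ∃ M : ℝ, ∀ x : EuclideanSpace ℝ (Fin d), ∀ t ∈ Icc (0:ℝ) T,
      ‖b x t‖ ≤ M * (1 + ‖x‖))
    (V : EuclideanSpace ℝ (Fin d) → ℝ) (hV : ContDiff ℝ 1 V)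
    (hVpos : ∀ x, 0 < V x)
    (C₃ : ℝ) (hC₃ : 0 < C₃)
    (hLyap : ∀ x : EuclideanSpace ℝ (Fin d), ∀ t ∈ Icc (0:ℝ) T,
      ⟪b x t, gradient V x⟫ ≤ C₃ * V x)
    (ν : Measure (EuclideanSpace ℝ (Fin d))) [IsFiniteMeasure ν]
    (hνV : ∫⁻ x, ENNReal.ofReal (V x) ∂ν < ⊤)
    (μ : ℝ → Measure (EuclideanSpace ℝ (Fin d)))
    (hfin : ∀ t ∈ Icc (0:ℝ) T, μ t univ ≤ ν univ)
    (hsol : IsNonnegSolution T b ν μ) :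
    ∀ᵐ t ∂(volume.restrict (Icc (0:ℝ) T)),
      ∫⁻ x, ENNReal.ofReal (V x) ∂(μ t)
        ≤ ENNReal.ofReal (Real.exp (C₃ * t)) * ∫⁻ x, ENNReal.ofReal (V x) ∂ν := by
  classical
  obtain ⟨hmeas, hcfin, hKint, hbint, hident⟩ := hsol
  obtain ⟨M, hMb⟩ := hbgrowth
  have hM0 : 0 ≤ M := by
    have h := hMb 0 0 ⟨le_rfl, hT.le⟩
    have h2 := norm_nonneg (b 0 0)
    simp only [norm_zero] at h
    linarith
  obtain ⟨Cη, hCη0, hCη⟩ := LyapAux.exists_eta_deriv_bound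
  have hbc : Continuous (fun q : EuclideanSpace ℝ (Fin d) × ℝ => b q.1 q.2) := hbsm.continuous
  have hμfin : ∀ t ∈ Icc (0:ℝ) T, μ t univ < ⊤ :=
    fun t ht => lt_of_le_of_lt (hfin t ht) (measure_lt_top ν univ)
  set L : ℝ := (∫⁻ x, ENNReal.ofReal (V x) ∂ν).toReal with hLdef
  set CN : ℕ → ℝ := fun N => (N:ℝ)*(16*M*Cη) with hCNdef
  have hCN0 : ∀ N, 0 ≤ CN N := fun N => mul_nonneg (Nat.cast_nonneg N) (by positivity)
  set a : ℕ → ℝ := fun k => ∫ s in Icc (0:ℝ) T, (μ s (LyapAux.Ak d k)).toReal with hadef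
  have haint : ∀ k, IntegrableOn (fun s => (μ s (LyapAux.Ak d k)).toReal) (Icc (0:ℝ) T) :=
    fun k => hKint _ (LyapAux.Ak_compact k)
  have ha0 : ∀ k, 0 ≤ a k := fun k => integral_nonneg fun s => ENNReal.toReal_nonneg
  have hmeasAk : ∀ k, Measurable fun s => μ s (LyapAux.Ak d k) :=
    fun k => hmeas _ (LyapAux.Ak_measurable k) (LyapAux.Ak_bounded k)
  -- the tail terms tend to zero
  have hatend : Tendsto a atTop (𝓝 0) := by
    set atil : ℕ → ℝ≥0∞ := fun k => ∫⁻ s in Icc (0:ℝ) T, μ s (LyapAux.Ak d k) with hatil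
    have hsum : ∑' k, atil k ≤ (ν univ) * (volume (Icc (0:ℝ) T)) := by
      rw [← lintegral_tsum (fun k => ((hmeasAk k).aemeasurable))]
      calc ∫⁻ s in Icc (0:ℝ) T, ∑' k, μ s (LyapAux.Ak d k)
          ≤ ∫⁻ _ in Icc (0:ℝ) T, ν univ := by
            apply lintegral_mono_ae
            filter_upwards [ae_restrict_mem measurableSet_Icc] with s hs
            rw [← measure_iUnion LyapAux.Ak_disjoint (fun k => LyapAux.Ak_measurable k)]
            exact le_trans (measure_mono (subset_univ _)) (hfin s hs)
        _ = ν univ * volume (Icc (0:ℝ) T) := by rw [setLIntegral_const]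
    have hfin' : ∑' k, atil k ≠ ⊤ :=
      ne_top_of_le_ne_top (ENNReal.mul_ne_top (measure_ne_top ν univ)
        (measure_Icc_lt_top.ne)) hsum
    have h1 : Tendsto atil atTop (𝓝 0) := ENNReal.tendsto_atTop_zero_of_tsum_ne_top hfin'
    have h2 : ∀ k, a k = (atil k).toReal := by
      intro k
      rw [hadef]
      refine integral_toReal ((hmeasAk k).aemeasurable.restrict) ?_
      filter_upwards [ae_restrict_mem measurableSet_Icc] with s hs
      exact lt_of_le_of_lt (le_trans (measure_mono (subset_univ _)) (hfin s hs))
        (measure_lt_top ν univ)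
    have h3 : Tendsto (fun k => (atil k).toReal) atTop (𝓝 0) := by
      have := (ENNReal.tendsto_toReal (by simp : (0:ℝ≥0∞) ≠ ⊤)).comp h1
      simpa [Function.comp_def] using this
    exact h3.congr (fun k => (h2 k).symm)
  -- the weak identities, for all k, N simultaneously
  have hae : ∀ᵐ t ∂(volume.restrict (Icc (0:ℝ) T)), ∀ k N : ℕ,
      (∫ x, LyapAux.uu C₃ V k N x t ∂(μ t))
        = (∫ x, LyapAux.uu C₃ V k N x 0 ∂ν)
          + ∫ s in Icc (0:ℝ) t,
              ∫ x, (deriv (LyapAux.uu C₃ V k N x) s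
                + ⟪b x s, gradient (fun y => LyapAux.uu C₃ V k N y s) x⟫) ∂(μ s) :=
    ae_all_iff.2 fun k => ae_all_iff.2 fun N =>
      hident _ (LyapAux.uu_contDiff C₃ V hV hVpos k N)
        ⟨2^(k+1), by positivity, fun x t h => LyapAux.uu_supp C₃ V k N x t h⟩
  filter_upwards [hae, ae_restrict_mem measurableSet_Icc] with t hid ht
  -- Step 1: the truncated estimate for fixed k, N
  have hstep1 : ∀ k N : ℕ,
      ∫⁻ x, ENNReal.ofReal (LyapAux.chi k x * LyapAux.Wf V N x) ∂(μ t)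
        ≤ ENNReal.ofReal (Real.exp (C₃*t) * (L + CN N * a k)) := by
    intro k N
    have hts : Icc (0:ℝ) t ⊆ Icc (0:ℝ) T := Icc_subset_Icc le_rfl ht.2
    have hchiWcont : Continuous (fun x => LyapAux.chi k x * LyapAux.Wf V N x) :=
      ((LyapAux.chi_contDiff1 k).continuous).mul ((LyapAux.Wf_contDiff1 V hV hVpos N).continuous)
    have hchiWnonneg : ∀ x : EuclideanSpace ℝ (Fin d),
        0 ≤ LyapAux.chi k x * LyapAux.Wf V N x :=
      fun x => mul_nonneg (LyapAux.chi_nonneg k x) (LyapAux.Wf_nonneg V hVpos N x)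
    have hchiWbound : ∀ x : EuclideanSpace ℝ (Fin d),
        |LyapAux.chi k x * LyapAux.Wf V N x| ≤ (N:ℝ) := by
      intro x
      rw [abs_of_nonneg (hchiWnonneg x)]
      calc LyapAux.chi k x * LyapAux.Wf V N x
          ≤ 1 * LyapAux.Wf V N x :=
            mul_le_mul_of_nonneg_right (LyapAux.chi_le_one k x) (LyapAux.Wf_nonneg V hVpos N x)
        _ = LyapAux.Wf V N x := one_mul _
        _ ≤ (N:ℝ) := LyapAux.Wf_le_N V hVpos N x
    -- pointwise bound on the inner space integral
    have hInner : ∀ᵐ s ∂(volume.restrict (Icc (0:ℝ) t)),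
        (∫ x, (deriv (LyapAux.uu C₃ V k N x) s
          + ⟪b x s, gradient (fun y => LyapAux.uu C₃ V k N y s) x⟫) ∂(μ s))
          ≤ CN N * (μ s (LyapAux.Ak d k)).toReal := by
      filter_upwards [ae_restrict_mem measurableSet_Icc] with s hs
      have hsT : s ∈ Icc (0:ℝ) T := hts hs
      have hμs : μ s univ < ⊤ := hμfin s hsT
      have hre : (∫ x, (deriv (LyapAux.uu C₃ V k N x) s
          + ⟪b x s, gradient (fun y => LyapAux.uu C₃ V k N y s) x⟫) ∂(μ s))
          = ∫ x, (LyapAux.g1 C₃ V b k N x s + LyapAux.g2 C₃ V b k N x s) ∂(μ s) :=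
        integral_congr_ae (Eventually.of_forall fun x => LyapAux.key_eq C₃ V hV hVpos b k N x s)
      rw [hre]
      have hg2b : ∀ x, |LyapAux.g2 C₃ V b k N x s|
          ≤ (LyapAux.Ak d k).indicator (fun _ => CN N) x := fun x =>
        LyapAux.g2_bound C₃ hC₃ V hVpos b M Cη hM0 hCη0 hCη k N x s hs.1 (hMb x s hsT)
      have hg2b' : ∀ x, |LyapAux.g2 C₃ V b k N x s| ≤ CN N := fun x =>
        (hg2b x).trans (Set.indicator_le_self' (fun x _ => hCN0 N) x)
      have hg2int : Integrable (fun x => LyapAux.g2 C₃ V b k N x s) (μ s) :=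
        LyapAux.integrable_of_bounded_continuous hμs
          (LyapAux.g2_continuous C₃ V hV hVpos b hbc k N s) hg2b'
      have hindint : Integrable ((LyapAux.Ak d k).indicator (fun _ => CN N)) (μ s) := by
        rw [integrable_indicator_iff (LyapAux.Ak_measurable k)]
        exact integrableOn_const (lt_of_le_of_lt (measure_mono (subset_univ _)) hμs).ne
      have hg2le : ∫ x, LyapAux.g2 C₃ V b k N x s ∂(μ s)
          ≤ CN N * (μ s (LyapAux.Ak d k)).toReal := by
        calc ∫ x, LyapAux.g2 C₃ V b k N x s ∂(μ s)
            ≤ ∫ x, (LyapAux.Ak d k).indicator (fun _ => CN N) x ∂(μ s) :=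
              integral_mono hg2int hindint (fun x => (le_abs_self _).trans (hg2b x))
          _ = (μ s (LyapAux.Ak d k)).toReal • CN N :=
              integral_indicator_const _ (LyapAux.Ak_measurable k)
          _ = CN N * (μ s (LyapAux.Ak d k)).toReal := by rw [smul_eq_mul, mul_comm]
      by_cases hi : Integrable
          (fun x => LyapAux.g1 C₃ V b k N x s + LyapAux.g2 C₃ V b k N x s) (μ s)
      · have hg1int : Integrable (fun x => LyapAux.g1 C₃ V b k N x s) (μ s) := by
          have h2 := hi.sub hg2int
          have h3 : ((fun x => LyapAux.g1 C₃ V b k N x s + LyapAux.g2 C₃ V b k N x s)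
              - fun x => LyapAux.g2 C₃ V b k N x s)
              = fun x => LyapAux.g1 C₃ V b k N x s := by
            funext x
            simp
          rwa [h3] at h2
        rw [integral_add hg1int hg2int]
        have hg1le : ∫ x, LyapAux.g1 C₃ V b k N x s ∂(μ s) ≤ 0 :=
          integral_nonpos fun x => LyapAux.g1_nonpos C₃ hC₃ V hVpos b k N x s
            (by rw [← LyapAux.inner_gradient]; exact hLyap x s hsT)
        linarith
      · rw [integral_undef hi]
        exact mul_nonneg (hCN0 N) ENNReal.toReal_nonneg
    -- integrate the bound in time
    have hIle : (∫ s in Icc (0:ℝ) t, ∫ x, (deriv (LyapAux.uu C₃ V k N x) s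
        + ⟪b x s, gradient (fun y => LyapAux.uu C₃ V k N y s) x⟫) ∂(μ s))
        ≤ CN N * a k := by
      have hβint : IntegrableOn (fun s => CN N * (μ s (LyapAux.Ak d k)).toReal)
          (Icc (0:ℝ) t) := (((haint k).mono_set hts)).const_mul _
      have h1 : (∫ s in Icc (0:ℝ) t, ∫ x, (deriv (LyapAux.uu C₃ V k N x) s
          + ⟪b x s, gradient (fun y => LyapAux.uu C₃ V k N y s) x⟫) ∂(μ s))
          ≤ ∫ s in Icc (0:ℝ) t, CN N * (μ s (LyapAux.Ak d k)).toReal := by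
        by_cases hi : IntegrableOn (fun s => ∫ x, (deriv (LyapAux.uu C₃ V k N x) s
            + ⟪b x s, gradient (fun y => LyapAux.uu C₃ V k N y s) x⟫) ∂(μ s)) (Icc (0:ℝ) t)
        · exact integral_mono_ae hi hβint hInner
        · rw [integral_undef hi]
          exact integral_nonneg fun s => mul_nonneg (hCN0 N) ENNReal.toReal_nonneg
      refine h1.trans ?_
      rw [integral_const_mul]
      refine mul_le_mul_of_nonneg_left ?_ (hCN0 N)
      exact setIntegral_mono_set (haint k)
        (Eventually.of_forall fun s => ENNReal.toReal_nonneg)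
        (HasSubset.Subset.eventuallyLE hts)
    -- process the weak identity
    have hidkN := hid k N
    have hXpos : 0 ≤ ∫ x, LyapAux.chi k x * LyapAux.Wf V N x ∂(μ t) :=
      integral_nonneg hchiWnonneg
    have hLHS : ∫ x, LyapAux.uu C₃ V k N x t ∂(μ t)
        = Real.exp (-(C₃*t)) * ∫ x, LyapAux.chi k x * LyapAux.Wf V N x ∂(μ t) := by
      simp only [LyapAux.uu]
      exact integral_const_mul _ _
    have hR0 : ∫ x, LyapAux.uu C₃ V k N x 0 ∂ν
        = ∫ x, LyapAux.chi k x * LyapAux.Wf V N x ∂ν := by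
      simp [LyapAux.uu]
    have hYint : Integrable (fun x => LyapAux.chi k x * LyapAux.Wf V N x) ν :=
      LyapAux.integrable_of_bounded_continuous (measure_lt_top ν univ) hchiWcont hchiWbound
    have hY : ∫ x, LyapAux.chi k x * LyapAux.Wf V N x ∂ν ≤ L := by
      have h1 : ENNReal.ofReal (∫ x, LyapAux.chi k x * LyapAux.Wf V N x ∂ν)
          = ∫⁻ x, ENNReal.ofReal (LyapAux.chi k x * LyapAux.Wf V N x) ∂ν :=
        ofReal_integral_eq_lintegral_ofReal hYint (ae_of_all _ hchiWnonneg)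
      have h2 : (∫⁻ x, ENNReal.ofReal (LyapAux.chi k x * LyapAux.Wf V N x) ∂ν)
          ≤ ∫⁻ x, ENNReal.ofReal (V x) ∂ν := by
        refine lintegral_mono fun x => ENNReal.ofReal_le_ofReal ?_
        calc LyapAux.chi k x * LyapAux.Wf V N x
            ≤ 1 * LyapAux.Wf V N x :=
              mul_le_mul_of_nonneg_right (LyapAux.chi_le_one k x) (LyapAux.Wf_nonneg V hVpos N x)
          _ = LyapAux.Wf V N x := one_mul _
          _ ≤ V x := LyapAux.Wf_le_V V hVpos N x
      have h3 : ENNReal.ofReal (∫ x, LyapAux.chi k x * LyapAux.Wf V N x ∂ν)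
          ≤ ∫⁻ x, ENNReal.ofReal (V x) ∂ν := h1 ▸ h2
      have h4 := ENNReal.toReal_mono hνV.ne h3
      rwa [ENNReal.toReal_ofReal (integral_nonneg hchiWnonneg)] at h4
    -- master inequality
    have hmain : ∫ x, LyapAux.chi k x * LyapAux.Wf V N x ∂(μ t)
        ≤ Real.exp (C₃*t) * (L + CN N * a k) := by
      have he1 : Real.exp (-(C₃*t)) * ∫ x, LyapAux.chi k x * LyapAux.Wf V N x ∂(μ t)
          ≤ L + CN N * a k := by
        rw [← hLHS, hidkN, hR0]
        linarith
      have he2 : Real.exp (C₃*t) * Real.exp (-(C₃*t)) = 1 := by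
        rw [← Real.exp_add]
        simp
      calc ∫ x, LyapAux.chi k x * LyapAux.Wf V N x ∂(μ t)
          = Real.exp (C₃*t) * (Real.exp (-(C₃*t))
              * ∫ x, LyapAux.chi k x * LyapAux.Wf V N x ∂(μ t)) := by
            rw [← mul_assoc, he2, one_mul]
        _ ≤ Real.exp (C₃*t) * (L + CN N * a k) :=
            mul_le_mul_of_nonneg_left he1 (Real.exp_pos _).le
    have hXint : Integrable (fun x => LyapAux.chi k x * LyapAux.Wf V N x) (μ t) :=
      LyapAux.integrable_of_bounded_continuous (hμfin t ht) hchiWcont hchiWbound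
    calc ∫⁻ x, ENNReal.ofReal (LyapAux.chi k x * LyapAux.Wf V N x) ∂(μ t)
        = ENNReal.ofReal (∫ x, LyapAux.chi k x * LyapAux.Wf V N x ∂(μ t)) :=
          (ofReal_integral_eq_lintegral_ofReal hXint (ae_of_all _ hchiWnonneg)).symm
      _ ≤ ENNReal.ofReal (Real.exp (C₃*t) * (L + CN N * a k)) :=
          ENNReal.ofReal_le_ofReal hmain

  -- Step 3: Fatou in k
  have hstep3 : ∀ N : ℕ, ∫⁻ x, ENNReal.ofReal (LyapAux.Wf V N x) ∂(μ t)
      ≤ ENNReal.ofReal (Real.exp (C₃*t) * L) := by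
    intro N
    have hmeasf : ∀ k : ℕ,
        Measurable fun x => ENNReal.ofReal (LyapAux.chi k x * LyapAux.Wf V N x) :=
      fun k => ((((LyapAux.chi_contDiff1 k).continuous).mul
        ((LyapAux.Wf_contDiff1 V hV hVpos N).continuous)).measurable).ennreal_ofReal
    have hpt : ∀ x, Tendsto (fun k => ENNReal.ofReal (LyapAux.chi k x * LyapAux.Wf V N x))
        atTop (𝓝 (ENNReal.ofReal (LyapAux.Wf V N x))) := by
      intro x
      apply Tendsto.congr' _ (tendsto_const_nhds
        (x := ENNReal.ofReal (LyapAux.Wf V N x)) (f := atTop))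
      have hev := (tendsto_pow_atTop_atTop_of_one_lt
        (by norm_num : (1:ℝ) < 4)).eventually_ge_atTop (‖x‖^2)
      filter_upwards [hev] with k hk
      rw [LyapAux.chi_one hk, one_mul]
    calc ∫⁻ x, ENNReal.ofReal (LyapAux.Wf V N x) ∂(μ t)
        = ∫⁻ x, Filter.liminf
            (fun k => ENNReal.ofReal (LyapAux.chi k x * LyapAux.Wf V N x)) atTop ∂(μ t) := by
          apply lintegral_congr
          intro x
          exact ((hpt x).liminf_eq).symm
      _ ≤ Filter.liminf
            (fun k => ∫⁻ x, ENNReal.ofReal (LyapAux.chi k x * LyapAux.Wf V N x) ∂(μ t))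
            atTop := lintegral_liminf_le hmeasf
      _ ≤ Filter.liminf
            (fun k => ENNReal.ofReal (Real.exp (C₃*t) * (L + CN N * a k))) atTop :=
          Filter.liminf_le_liminf (Eventually.of_forall (fun k => hstep1 k N))
      _ = ENNReal.ofReal (Real.exp (C₃*t) * L) := by
          have harith : Tendsto (fun k => Real.exp (C₃*t) * (L + CN N * a k)) atTop
              (𝓝 (Real.exp (C₃*t) * (L + CN N * 0))) :=
            tendsto_const_nhds.mul (tendsto_const_nhds.add (tendsto_const_nhds.mul hatend))
          rw [mul_zero, add_zero] at harith
          exact ((ENNReal.continuous_ofReal.tendsto _).comp harith).liminf_eq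
  -- Step 4: Fatou in N
  have hstep4 : ∫⁻ x, ENNReal.ofReal (V x) ∂(μ t)
      ≤ ENNReal.ofReal (Real.exp (C₃*t) * L) := by
    have hmeasf : ∀ N : ℕ, Measurable fun x => ENNReal.ofReal (LyapAux.Wf V N x) :=
      fun N => (((LyapAux.Wf_contDiff1 V hV hVpos N).continuous).measurable).ennreal_ofReal
    have hpt : ∀ x, Tendsto (fun N => ENNReal.ofReal (LyapAux.Wf V N x))
        atTop (𝓝 (ENNReal.ofReal (V x))) :=
      fun x => (ENNReal.continuous_ofReal.tendsto _).comp (LyapAux.phi_tendsto (hVpos x))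
    calc ∫⁻ x, ENNReal.ofReal (V x) ∂(μ t)
        = ∫⁻ x, Filter.liminf (fun N => ENNReal.ofReal (LyapAux.Wf V N x)) atTop ∂(μ t) := by
          apply lintegral_congr
          intro x
          exact ((hpt x).liminf_eq).symm
      _ ≤ Filter.liminf (fun N => ∫⁻ x, ENNReal.ofReal (LyapAux.Wf V N x) ∂(μ t)) atTop :=
          lintegral_liminf_le hmeasf
      _ ≤ Filter.liminf (fun _ : ℕ => ENNReal.ofReal (Real.exp (C₃*t) * L)) atTop :=
          Filter.liminf_le_liminf (Eventually.of_forall hstep3)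
      _ = ENNReal.ofReal (Real.exp (C₃*t) * L) := liminf_const _
  refine le_trans hstep4 (le_of_eq ?_)
  rw [ENNReal.ofReal_mul (Real.exp_nonneg _), hLdef, ENNReal.ofReal_toReal hνV.ne]
end
end
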